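/- For a simplicial group G, the maps (D_G)_n : Diag_n NG → W̄_n G, (g_i)_{i=n−1,…,0} ↦ (g_i d_n d_{n−1} ⋯ d_{i+1})_{i=n−1,…,0}, assemble into a simplicial map D_G : Diag NG → W̄G, natural in G. -/

import Mathlib

namespace Paper

/-- clamped coface map `δ^k : [a] → [b]`. -/
def δOH (k a b : ℕ) : Fin (a+1) →o Fin (b+1) where
  toFun i := ⟨min (if (i:ℕ) < k then (i:ℕ) else (i:ℕ)+1) b, Nat.lt_succ_of_le (Nat.min_le_right _ _)⟩
  monotone' := by
    intro i j hij
    have h : (i:ℕ) ≤ (j:ℕ) := hij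
    simp only [Fin.mk_le_mk]
    split_ifs <;> omega

/-- clamped codegeneracy map `σ^k : [a] → [b]`. -/
def σOH (k a b : ℕ) : Fin (a+1) →o Fin (b+1) where
  toFun i := ⟨min (if (i:ℕ) ≤ k then (i:ℕ) else (i:ℕ)-1) b, Nat.lt_succ_of_le (Nat.min_le_right _ _)⟩
  monotone' := by
    intro i j hij
    have h : (i:ℕ) ≤ (j:ℕ) := hij
    simp only [Fin.mk_le_mk]
    split_ifs <;> omega

/-- `τ^k : [n] → [1]`, sending `[0, n-k]` to `0` and the rest to `1`. -/
def τOH (n k : ℕ) : Fin (n+1) →o Fin 2 where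
  toFun i := if (i:ℕ) + k ≤ n then 0 else 1
  monotone' := by
    intro i j hij
    have h : (i:ℕ) ≤ (j:ℕ) := hij
    dsimp only
    split_ifs with h1 h2 h3
    · exact le_refl _
    · exact Fin.zero_le _
    · exact absurd h3 (by omega)
    · exact le_refl _

/-- application of `θ : [m] → [n]` to a natural number (clamped). -/
def fApp {m n : ℕ} (θ : Fin (m+1) →o Fin (n+1)) (x : ℕ) : ℕ :=
  (θ ⟨min x m, Nat.lt_succ_of_le (Nat.min_le_right _ _)⟩ : Fin (n+1))

theorem fApp_mono {m n : ℕ} (θ : Fin (m+1) →o Fin (n+1)) {x y : ℕ} (h : x ≤ y) :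
    fApp θ x ≤ fApp θ y :=
  Fin.le_def.mp (θ.monotone (Fin.mk_le_mk.mpr (by omega)))

theorem fApp_le {m n : ℕ} (θ : Fin (m+1) →o Fin (n+1)) (x : ℕ) : fApp θ x ≤ n :=
  Nat.lt_succ_iff.mp (Fin.isLt _)

theorem fApp_coe {m n : ℕ} (θ : Fin (m+1) →o Fin (n+1)) (p : Fin (m+1)) :
    fApp θ (p:ℕ) = (θ p : ℕ) := by
  have hp : (⟨min (p:ℕ) m, Nat.lt_succ_of_le (Nat.min_le_right _ _)⟩ : Fin (m+1)) = p :=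
    Fin.ext (show min (p:ℕ) m = (p:ℕ) from by have := p.isLt; omega)
  unfold fApp
  rw [hp]

/-- `Spl_{≤ p}(θ) : [p] → [pθ]`. -/
def splLe {m n : ℕ} (θ : Fin (m+1) →o Fin (n+1)) (p : Fin (m+1)) :
    Fin ((p:ℕ)+1) →o Fin ((θ p : ℕ)+1) where
  toFun i := ⟨fApp θ (i:ℕ), by
    have h1 : fApp θ (i:ℕ) ≤ fApp θ (p:ℕ) := fApp_mono θ (by have := i.isLt; omega)
    have h2 : fApp θ (p:ℕ) = (θ p : ℕ) := fApp_coe θ p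
    omega⟩
  monotone' := by
    intro a b hab
    have h : (a:ℕ) ≤ (b:ℕ) := hab
    simp only [Fin.mk_le_mk]
    exact fApp_mono θ h

/-- `Spl_{≥ p}(θ) : [m-p] → [n-pθ]`. -/
def splGe {m n : ℕ} (θ : Fin (m+1) →o Fin (n+1)) (p : Fin (m+1)) :
    Fin (m - (p:ℕ) + 1) →o Fin (n - (θ p : ℕ) + 1) where
  toFun i := ⟨fApp θ ((i:ℕ) + (p:ℕ)) - (θ p : ℕ), by
    have h1 : fApp θ ((i:ℕ) + (p:ℕ)) ≤ n := fApp_le θ _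
    omega⟩
  monotone' := by
    intro a b hab
    have h : (a:ℕ) ≤ (b:ℕ) := hab
    simp only [Fin.mk_le_mk]
    have := fApp_mono θ (show (a:ℕ) + (p:ℕ) ≤ (b:ℕ) + (p:ℕ) by omega)
    omega

/-- the restriction `θ|_[i]^[j] : [i] → [j]` of `θ` (clamped). -/
def restrictOH {m n : ℕ} (θ : Fin (m+1) →o Fin (n+1)) (i j : ℕ) : Fin (i+1) →o Fin (j+1) where
  toFun k := ⟨min (fApp θ (k:ℕ)) j, Nat.lt_succ_of_le (Nat.min_le_right _ _)⟩
  monotone' := by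
    intro a b hab
    have h : (a:ℕ) ≤ (b:ℕ) := hab
    simp only [Fin.mk_le_mk]
    have := fApp_mono θ h
    omega

/-- ascending product `f a * f (a+1) * ⋯ * f (b-1)`. -/
def aProd {γ : Type*} [Monoid γ] (f : ℕ → γ) (a : ℕ) : ℕ → γ
  | 0 => 1
  | b+1 => if a ≤ b then aProd f a b * f b else 1

/-- descending product `f (b-1) * f (b-2) * ⋯ * f a`. -/
def dProd {γ : Type*} [Monoid γ] (f : ℕ → γ) (a : ℕ) : ℕ → γ
  | 0 => 1
  | b+1 => if a ≤ b then f b * dProd f a b else 1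

end Paper
namespace Paper

/-- A simplicial group, given by levels, structure maps, functoriality,
and levelwise multiplicativity. -/
structure SGrp where
  obj : ℕ → Type
  grp : ∀ n, Group (obj n)
  map : ∀ {m n : ℕ}, (Fin (m+1) →o Fin (n+1)) → obj n → obj m
  map_id : ∀ {n : ℕ} (x : obj n), map OrderHom.id x = x
  map_comp : ∀ {l m n : ℕ} (α : Fin (l+1) →o Fin (m+1)) (β : Fin (m+1) →o Fin (n+1)) (x : obj n),
    map α (map β x) = map (β.comp α) x
  map_mul : ∀ {m n : ℕ} (θ : Fin (m+1) →o Fin (n+1)) (x y : obj n),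
    map θ (x * y) = map θ x * map θ y

attribute [instance] SGrp.grp

namespace SGrp

/-- face `d_k : G_N → G_{N-1}` -/
def face (G : SGrp) (k : ℕ) {N : ℕ} : G.obj N → G.obj (N-1) := G.map (δOH k (N-1) N)

/-- degeneracy `s_k : G_M → G_{M+1}` -/
def deg (G : SGrp) (k : ℕ) {M : ℕ} : G.obj M → G.obj (M+1) := G.map (σOH k (M+1) M)

/-- transport between levels (junk value `1` when levels differ). -/
def gcast (G : SGrp) {a : ℕ} (b : ℕ) (x : G.obj a) : G.obj b := if h : a = b then h ▸ x else 1

/-- descending composite of faces `d_{i+c} d_{i+c-1} ⋯ d_{i+1}`. -/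
def dcomp (G : SGrp) : (i c : ℕ) → {N : ℕ} → G.obj N → G.obj (N - c)
  | _, 0, _, x => x
  | i, c+1, _, x => G.face (i+1) (G.dcomp (i+1) c x)

/-- ascending composite of degeneracies `s_i s_{i+1} ⋯ s_{i+c-1}`. -/
def scomp (G : SGrp) : (i c : ℕ) → {M : ℕ} → G.obj M → G.obj (M + c)
  | _, 0, _, x => x
  | i, c+1, _, x => G.deg (i+c) (G.scomp i c x)

/-- `x ↦ x d_j ⋯ d_{i+1} s_i ⋯ s_{j-1}`, an endomap of `G_N`. -/
def ds (G : SGrp) (i j : ℕ) {N : ℕ} (x : G.obj N) : G.obj N :=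
  G.gcast N (G.scomp i (min (j - i) N) (G.dcomp i (min (j - i) N) x))

/-- `x ↦ x d_j ⋯ d_{i+1} s_i ⋯ s_{n-1} : G_j → G_n`. -/
def dsTo (G : SGrp) (i n : ℕ) {j : ℕ} (x : G.obj j) : G.obj n :=
  G.gcast n (G.scomp i (n - i) (G.gcast i (G.dcomp i (j - i) x)))

/-- the `y_i` of the section `S_G`, defined by descending recursion (with fuel). -/
def yAux (G : SGrp) (n : ℕ) (g : ∀ j : ℕ, G.obj j) : ℕ → ℕ → G.obj n
  | 0, _ => 1
  | fuel+1, i =>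
      aProd (fun j => G.ds i j (G.yAux n g fuel j)⁻¹) (i+1) n *
      dProd (fun j => G.dsTo i n (g j)) i n

/-- `W̄_n G = ∏_{j = n-1}^{0} G_j`. -/
def WbarN (G : SGrp) (n : ℕ) : Type := ∀ j : Fin n, G.obj (j:ℕ)

/-- extension of a tuple in `W̄_n G` by `1`. -/
def gE (G : SGrp) {n : ℕ} (g : G.WbarN n) : ∀ j : ℕ, G.obj j :=
  fun j => if h : j < n then g ⟨j, h⟩ else 1

/-- the coretraction `(S_G)_n : W̄_n G → Diag_n NG = (G_n)^n`. -/
def SGn (G : SGrp) (n : ℕ) (g : G.WbarN n) : Fin n → G.obj n :=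
  fun i => G.yAux n (G.gE g) n (i:ℕ)

/-- extension of a tuple in `(G_n)^n` by `1`. -/
def xE (G : SGrp) {n : ℕ} (x : Fin n → G.obj n) : ℕ → G.obj n :=
  fun j => if h : j < n then x ⟨j, h⟩ else 1

/-- the structure map `W̄_θ : W̄_n G → W̄_m G` of the Kan classifying simplicial set. -/
def wbarMap (G : SGrp) {m n : ℕ} (θ : Fin (m+1) →o Fin (n+1)) (g : G.WbarN n) : G.WbarN m :=
  fun i => dProd (fun j => G.map (restrictOH θ (i:ℕ) j) (G.gE g j))
    ((θ i.castSucc : Fin (n+1)) : ℕ) ((θ i.succ : Fin (n+1)) : ℕ)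

/-- the structure map `(Diag NG)_θ : (G_n)^n → (G_m)^m` of the diagonal of the nerve. -/
def diagMap (G : SGrp) {m n : ℕ} (θ : Fin (m+1) →o Fin (n+1)) (x : Fin n → G.obj n) :
    Fin m → G.obj m :=
  fun i => dProd (fun j => G.map θ (G.xE x j))
    ((θ i.castSucc : Fin (n+1)) : ℕ) ((θ i.succ : Fin (n+1)) : ℕ)

/-- the retraction `(D_G)_n : Diag_n NG → W̄_n G`, `(g_i)_i ↦ (g_i d_n ⋯ d_{i+1})_i`. -/
def DGn (G : SGrp) (n : ℕ) (x : Fin n → G.obj n) : G.WbarN n :=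
  fun i => G.gcast (i:ℕ) (G.dcomp (i:ℕ) (n - (i:ℕ)) (x i))

/-- the components `y_i^{(n+1-k)}` of the homotopy `H`, by descending recursion (with fuel). -/
def hAux (G : SGrp) (n k : ℕ) (g : ℕ → G.obj n) : ℕ → ℕ → G.obj n
  | 0, _ => 1
  | fuel+1, i =>
      if k ≤ i + 1 then g i
      else
        aProd (fun j => G.ds i j (G.hAux n k g fuel j)⁻¹) (i+1) (k-1) *
        dProd (fun j => G.ds i (k-1) (g j)) i (k-1)

end SGrp

/-- recover `k` from the simplex `τ^{n+1-k} ∈ Δ^1_n`: the number of vertices sent to `0`. -/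
def kOf {n : ℕ} (t : Fin (n+1) →o Fin 2) : ℕ :=
  (Finset.univ.filter (fun i => t i = 0)).card

namespace SGrp

/-- the homotopy `H_n : Diag_n NG × Δ^1_n → Diag_n NG`. -/
def Hn (G : SGrp) (n : ℕ) (x : Fin n → G.obj n) (t : Fin (n+1) →o Fin 2) : Fin n → G.obj n :=
  fun i => G.hAux n (kOf t) (G.xE x) (n+1) (i:ℕ)

end SGrp

/-- morphisms of simplicial groups. -/
structure SGrpHom (G G' : SGrp) where
  app : ∀ n, G.obj n → G'.obj n
  comm : ∀ {m n : ℕ} (θ : Fin (m+1) →o Fin (n+1)) (x : G.obj n),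
    app m (G.map θ x) = G'.map θ (app n x)
  mul : ∀ (n : ℕ) (x y : G.obj n), app n (x * y) = app n x * app n y

end Paper

/-!
The composite `d_n ⋯ d_{i+1} : G_n → G_i` is the structure map of the initial-segment inclusion
`[i] ↪ [n]`, so `D_G` just restricts the `i`-th coordinate to its first `i + 1` vertices. Both
claims then follow from functoriality of `G`, the naturality of morphisms, and the fact that a
monotone `θ` maps `[0, i]` into `[0, θ i]`.
-/

namespace Paper

/-- The inclusion `[a] ↪ [b]` of an initial segment, clamped at `b` so that it is defined for
all `a b` (it is only an inclusion when `a ≤ b`). -/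
def inclOH (a b : ℕ) : Fin (a+1) →o Fin (b+1) where
  toFun t := ⟨min (t:ℕ) b, Nat.lt_succ_of_le (Nat.min_le_right _ _)⟩
  monotone' _ _ hij := Fin.mk_le_mk.mpr (min_le_min_right b (Fin.le_def.mp hij))

lemma inclOH_self (a : ℕ) : inclOH a a = OrderHom.id := by
  ext t
  exact Nat.min_eq_left (Nat.lt_succ_iff.mp t.isLt)

lemma inclOH_comp_inclOH {a b c : ℕ} (h : a ≤ b) :
    (inclOH b c).comp (inclOH a b) = inclOH a c := by
  ext t
  have ht := t.isLt
  show min (min (t:ℕ) b) c = min (t:ℕ) c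
  omega

lemma inclOH_comp_restrictOH {m n : ℕ} (θ : Fin (m+1) →o Fin (n+1)) {i j : ℕ}
    (h : fApp θ i ≤ j) : (inclOH j n).comp (restrictOH θ i j) = θ.comp (inclOH i m) := by
  ext t
  have hθt : fApp θ t ≤ fApp θ i := fApp_mono θ (Nat.lt_succ_iff.mp t.isLt)
  have hθn : fApp θ t ≤ n := fApp_le θ t
  show min (min (fApp θ t) j) n = fApp θ t
  exact (congrArg (min · n) (Nat.min_eq_left (hθt.trans h))).trans (Nat.min_eq_left hθn)

lemma map_dProd {γ γ' F : Type*} [Monoid γ] [Monoid γ'] [FunLike F γ γ'] [MonoidHomClass F γ γ']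
    (φ : F) (f : ℕ → γ) (a : ℕ) : ∀ b, φ (dProd f a b) = dProd (fun j => φ (f j)) a b
  | 0 => map_one φ
  | b+1 => by
    simp only [dProd]
    split_ifs
    · rw [map_mul, map_dProd φ f a b]
    · exact map_one φ

lemma dProd_congr {γ : Type*} [Monoid γ] {f g : ℕ → γ} {a : ℕ} :
    ∀ {b}, (∀ j, a ≤ j → j < b → f j = g j) → dProd f a b = dProd g a b
  | 0, _ => rfl
  | b+1, h => by
    simp only [dProd]
    split_ifs with hab
    · rw [h b hab b.lt_succ_self, dProd_congr fun j hj hj' => h j hj (Nat.lt_succ_of_lt hj')]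
    · rfl

namespace SGrp

variable (G : SGrp)

def mapHom {m n : ℕ} (θ : Fin (m+1) →o Fin (n+1)) : G.obj n →* G.obj m :=
  MonoidHom.mk' (G.map θ) (G.map_mul θ)

lemma gcast_eq_map {a b : ℕ} (h : a = b) (x : G.obj a) :
    G.gcast b x = G.map (inclOH b a) x := by
  subst h
  rw [inclOH_self, G.map_id]
  exact dif_pos rfl

/-- Since `i + c = N`, each face in the composite is the last face of its level. -/
lemma dcomp_eq_map : ∀ (i c : ℕ) {N : ℕ}, i + c = N → ∀ x : G.obj N,
    G.dcomp i c x = G.map (inclOH (N - c) N) x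
  | _, 0, N, _, x => by
    show x = G.map (inclOH N N) x
    rw [inclOH_self, G.map_id]
  | i, c+1, N, h, x => by
    show G.map (δOH (i+1) _ _) (G.dcomp (i+1) c x) = _
    rw [dcomp_eq_map (i+1) c (by omega), G.map_comp]
    congr 1
    ext t
    have ht : (t:ℕ) < N - c - 1 + 1 := t.isLt
    show min (min (if (t:ℕ) < i+1 then (t:ℕ) else (t:ℕ)+1) (N - c)) N = min (t:ℕ) N
    split_ifs <;> omega

lemma DGn_apply {n : ℕ} (x : Fin n → G.obj n) (i : Fin n) :
    G.DGn n x i = G.map (inclOH i n) (x i) := by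
  have hi : (i:ℕ) + (n - i) = n := Nat.add_sub_cancel' i.isLt.le
  rw [DGn, G.dcomp_eq_map i (n - i) hi, G.gcast_eq_map (by omega), G.map_comp,
    inclOH_comp_inclOH (by omega)]

lemma wbarMap_DGn {m n : ℕ} (θ : Fin (m+1) →o Fin (n+1)) (x : Fin n → G.obj n) :
    G.wbarMap θ (G.DGn n x) = G.DGn m (G.diagMap θ x) := by
  funext i
  rw [DGn_apply, diagMap]
  refine (dProd_congr fun j hj hjθ => ?_).trans (map_dProd (G.mapHom (inclOH i m)) _ _ _).symm
  have hjn : j < n := hjθ.trans_le (Nat.lt_succ_iff.mp (θ i.succ).isLt)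
  have hθi : fApp θ i ≤ j := (fApp_coe θ i.castSucc).trans_le hj
  rw [gE, dif_pos hjn, DGn_apply, xE, dif_pos hjn]
  simp only [mapHom, MonoidHom.mk'_apply, G.map_comp, inclOH_comp_restrictOH θ hθi]

end SGrp

lemma SGrpHom.app_DGn {G G' : SGrp} (f : SGrpHom G G') {n : ℕ} (x : Fin n → G.obj n) :
    (fun j : Fin n => f.app j (G.DGn n x j)) = G'.DGn n (fun i => f.app n (x i)) := by
  funext j
  rw [G.DGn_apply, G'.DGn_apply, f.comm]

end Paper

open Paper Paper.SGrp in
/-- the maps `(D_G)_n : Diag_n NG → W̄_n G` assemble into a simplicial map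
`D_G : Diag NG → W̄G`, natural in `G`. -/
theorem stmt_7 :
    (∀ (G : SGrp) {m n : ℕ} (θ : Fin (m+1) →o Fin (n+1)) (x : Fin n → G.obj n),
      G.wbarMap θ (G.DGn n x) = G.DGn m (G.diagMap θ x)) ∧
    (∀ (G G' : SGrp) (f : SGrpHom G G') (n : ℕ) (x : Fin n → G.obj n),
      (fun j : Fin n => f.app (j:ℕ) (G.DGn n x j)) = G'.DGn n (fun i => f.app n (x i))) :=
  ⟨fun G _ _ θ x => G.wbarMap_DGn θ x, fun _ _ f _ x => f.app_DGn x⟩
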